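/- Let ρ be a d×d density matrix and let Φ₁,…,Φ_N (N ≥ 2) be quantum channels on d×d matrices, where Φ_s has Kraus operators K₁ˢ,…,K_nˢ. Then for any permutations π₁,…,π_N of {1,…,n}, ∑_{s=1}^{N} I_ρ(Φ_s) ≥ (1/N) { ∑_{i=1}^{n} I_ρ( ∑_{s=1}^{N} K^s_{π_s(i)} ) + (2/(N(N−1))) [ ∑_{1≤s<t≤N} √( ∑_{i=1}^{n} I_ρ(K^s_{π_s(i)} − K^t_{π_t(i)}) ) ]² }. -/

import Mathlib

open Matrix Finset
open scoped ComplexOrder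

/-- The positive semidefinite square root `hρ.sqrt` of the older Mathlib, spelled out. -/
noncomputable def posSemidefSqrt {d : ℕ} {ρ : Matrix (Fin d) (Fin d) ℂ} (hρ : ρ.PosSemidef) :
    Matrix (Fin d) (Fin d) ℂ :=
  hρ.1.eigenvectorUnitary.1 * diagonal ((↑) ∘ Real.sqrt ∘ hρ.1.eigenvalues) *
    (star hρ.1.eigenvectorUnitary : Matrix (Fin d) (Fin d) ℂ)

/-- Wigner–Yanase skew information `I_ρ(A) = (1/2) Tr([√ρ, A]† [√ρ, A])` of a matrix `A`
with respect to a positive semidefinite matrix `ρ`, where `√ρ = hρ.sqrt` is the positive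
semidefinite square root of `ρ`. -/
noncomputable def skewInfo {d : ℕ} {ρ : Matrix (Fin d) (Fin d) ℂ} (hρ : ρ.PosSemidef)
    (A : Matrix (Fin d) (Fin d) ℂ) : ℝ :=
  (1 / 2 : ℝ) *
    (((posSemidefSqrt hρ * A - A * posSemidefSqrt hρ)ᴴ * (posSemidefSqrt hρ * A - A * posSemidefSqrt hρ)).trace).re

/-! `I_ρ` is half the real quadratic form `A ↦ Re Tr([√ρ, A]ᴴ [√ρ, A])`. For any quadratic form
Lagrange's identity `N ∑ₛ Q(xₛ) = Q(∑ₛ xₛ) + ∑_{s<t} Q(xₛ - xₜ)` holds; apply it to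
`xₛ = K^s_{πₛ(i)}`, sum over `i` (the permutations do not change `∑ᵢ I_ρ(K^s_i)`), and bound the
pair term from below by Cauchy–Schwarz over the `N(N-1)/2` pairs `s < t`. -/

section Combinatorics

variable {ι : Type*} [Fintype ι] [LinearOrder ι] [LocallyFiniteOrderTop ι]
  [LocallyFiniteOrderBot ι]

theorem Finset.sum_add_sum_sum_Ioi_add_eq_card_nsmul_sum {M : Type*} [AddCommMonoid M]
    (f : ι → M) :
    ∑ s, f s + ∑ s, ∑ t ∈ Ioi s, (f s + f t) = Fintype.card ι • ∑ s, f s := by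
  rw [sum_congr rfl fun s _ => sum_congr rfl fun t _ => add_comm (f s) (f t),
    sum_sum_Ioi_add_eq_sum_sum_off_diag fun t (_ : ι) => f t, ← sum_add_distrib]
  simp [← Fintype.sum_eq_add_sum_compl]

theorem Finset.sum_card_Ioi_eq_choose_two :
    ∑ s : ι, #(Ioi s) = (Fintype.card ι).choose 2 := by
  have h := sum_add_sum_sum_Ioi_add_eq_card_nsmul_sum (ι := ι) fun _ => 1
  simp only [sum_const, card_univ, smul_eq_mul, mul_one, ← sum_mul] at h
  rw [Nat.choose_two_right, Nat.mul_sub_one, ← h]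
  omega

theorem Finset.sq_sum_sum_Ioi_le (f : ι → ι → ℝ) :
    (∑ s, ∑ t ∈ Ioi s, f s t) ^ 2 ≤
      (Fintype.card ι * (Fintype.card ι - 1) / 2 : ℝ) * ∑ s, ∑ t ∈ Ioi s, f s t ^ 2 := by
  rw [sum_sigma', sum_sigma', ← Nat.cast_choose_two, ← sum_card_Ioi_eq_choose_two, ← card_sigma]
  exact sq_sum_le_card_mul_sum_sq

end Combinatorics

namespace QuadraticMap

variable {R M P ι : Type*} [CommRing R] [AddCommGroup M] [Module R M] [AddCommGroup P]
  [Module R P] [Fintype ι] [LinearOrder ι] [LocallyFiniteOrderTop ι]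

theorem map_sum_univ_eq_add_sum_Ioi_polar (Q : QuadraticMap R M P) (x : ι → M) :
    Q (∑ s, x s) = ∑ s, Q (x s) + ∑ s, ∑ t ∈ Ioi s, polar Q (x s) (x t) := by
  classical
  have pairs : {p ∈ (univ : Finset ι).offDiag | p.1 < p.2} =
      {p ∈ (univ : Finset (ι × ι)) | p.1 < p.2} := by
    ext p
    simpa using ne_of_lt
  rw [Q.map_sum, sum_sym2_filter_not_isDiag, pairs, sum_filter, ← univ_product_univ, sum_product]
  simp [← sum_filter, filter_lt_eq_Ioi]

theorem map_sub_eq_add_sub_polar (Q : QuadraticMap R M P) (x y : M) :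
    Q (x - y) = Q x + Q y - polar Q x y := by
  rw [sub_eq_add_neg, ← neg_neg (polar Q x y), ← polar_neg_right, polar, Q.map_neg]
  abel

theorem card_nsmul_sum_eq_map_sum_add_sum_Ioi_map_sub [LocallyFiniteOrderBot ι]
    (Q : QuadraticMap R M P) (x : ι → M) :
    Fintype.card ι • ∑ s, Q (x s) = Q (∑ s, x s) + ∑ s, ∑ t ∈ Ioi s, Q (x s - x t) := by
  rw [← sum_add_sum_sum_Ioi_add_eq_card_nsmul_sum, map_sum_univ_eq_add_sum_Ioi_polar, add_assoc,
    ← sum_add_distrib]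
  simp_rw [← sum_add_distrib, map_sub_eq_add_sub_polar, add_sub_cancel]

end QuadraticMap

namespace Matrix

variable {m n : Type*} [Fintype m] [Fintype n]

variable (m n) in
noncomputable def frobeniusSqForm : QuadraticForm ℝ (Matrix m n ℂ) :=
  LinearMap.BilinMap.toQuadraticMap <| LinearMap.mk₂ ℝ (fun X Y => ((Xᴴ * Y).trace).re)
    (fun X X' Y => by simp [Matrix.add_mul]) (fun c X Y => by simp [Matrix.smul_mul])
    (fun X Y Y' => by simp [Matrix.mul_add]) (fun c X Y => by simp [Matrix.mul_smul])

theorem frobeniusSqForm_nonneg (X : Matrix m n ℂ) : 0 ≤ frobeniusSqForm m n X :=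
  (Complex.nonneg_iff.mp (posSemidef_conjTranspose_mul_self X).trace_nonneg).1

end Matrix

section SkewInformation

variable {d : ℕ} {ρ : Matrix (Fin d) (Fin d) ℂ}

noncomputable def skewInfoForm (hρ : ρ.PosSemidef) :
    QuadraticForm ℝ (Matrix (Fin d) (Fin d) ℂ) :=
  (1 / 2 : ℝ) • (frobeniusSqForm (Fin d) (Fin d)).comp
    (LinearMap.mulLeft ℝ (posSemidefSqrt hρ) - LinearMap.mulRight ℝ (posSemidefSqrt hρ))

theorem skewInfoForm_apply (hρ : ρ.PosSemidef) (A : Matrix (Fin d) (Fin d) ℂ) :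
    skewInfoForm hρ A = skewInfo hρ A := rfl

theorem skewInfo_nonneg (hρ : ρ.PosSemidef) (A : Matrix (Fin d) (Fin d) ℂ) :
    0 ≤ skewInfo hρ A :=
  mul_nonneg (by norm_num) (frobeniusSqForm_nonneg _)

theorem card_mul_sum_sum_skewInfo_eq {n N : ℕ} (hρ : ρ.PosSemidef)
    (K : Fin N → Fin n → Matrix (Fin d) (Fin d) ℂ) (π : Fin N → Equiv.Perm (Fin n)) :
    (N : ℝ) * ∑ s, ∑ i, skewInfo hρ (K s i) =
      ∑ i, skewInfo hρ (∑ s, K s (π s i)) +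
        ∑ s, ∑ t ∈ Ioi s, ∑ i, skewInfo hρ (K s (π s i) - K t (π t i)) := by
  have relabel : ∀ s, ∑ i, skewInfo hρ (K s i) = ∑ i, skewInfo hρ (K s (π s i)) :=
    fun s => (Equiv.sum_comp (π s) _).symm
  have lagrange : ∀ i, (N : ℝ) * ∑ s, skewInfo hρ (K s (π s i)) =
      skewInfo hρ (∑ s, K s (π s i)) +
        ∑ s, ∑ t ∈ Ioi s, skewInfo hρ (K s (π s i) - K t (π t i)) := fun i => by
    simpa only [skewInfoForm_apply, Fintype.card_fin, nsmul_eq_mul] using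
      (skewInfoForm hρ).card_nsmul_sum_eq_map_sum_add_sum_Ioi_map_sub fun s => K s (π s i)
  simp_rw [relabel]
  rw [sum_comm, mul_sum]
  simp_rw [lagrange, sum_add_distrib]
  rw [sum_comm]
  exact congrArg _ (sum_congr rfl fun s _ => sum_comm)

end SkewInformation

theorem stmt_1_general {d n N : ℕ}
    (ρ : Matrix (Fin d) (Fin d) ℂ) (hρ : ρ.PosSemidef)
    (K : Fin N → Fin n → Matrix (Fin d) (Fin d) ℂ)
    (π : Fin N → Equiv.Perm (Fin n)) :
    ∑ s, ∑ i, skewInfo hρ (K s i) ≥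
      (1 / (N : ℝ)) *
        ((∑ i, skewInfo hρ (∑ s, K s (π s i)))
          + (2 / ((N : ℝ) * ((N : ℝ) - 1))) *
            (∑ s : Fin N, ∑ t ∈ Finset.Ioi s,
              Real.sqrt (∑ i, skewInfo hρ (K s (π s i) - K t (π t i)))) ^ 2) := by
  set c : Fin N → Fin N → ℝ := fun s t => ∑ i, skewInfo hρ (K s (π s i) - K t (π t i))
  set a : ℝ := N * (N - 1)
  have hc (s t) : 0 ≤ c s t := sum_nonneg fun i _ => skewInfo_nonneg hρ _
  have ha : 0 ≤ a := by rcases N with _ | N <;> simp [a]; positivity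
  have cauchy_schwarz : (∑ s, ∑ t ∈ Ioi s, √(c s t)) ^ 2 ≤ a / 2 * ∑ s, ∑ t ∈ Ioi s, c s t := by
    simpa [Real.sq_sqrt (hc _ _)] using sq_sum_sum_Ioi_le fun s t => √(c s t)
  have pair_bound :
      2 / a * (∑ s, ∑ t ∈ Ioi s, √(c s t)) ^ 2 ≤ ∑ s, ∑ t ∈ Ioi s, c s t := calc
    _ ≤ 2 / a * (a / 2 * ∑ s, ∑ t ∈ Ioi s, c s t) := by gcongr
    _ = a / a * ∑ s, ∑ t ∈ Ioi s, c s t := by ring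
    _ ≤ _ := mul_le_of_le_one_left (sum_nonneg fun s _ => sum_nonneg fun t _ => hc s t)
      (div_self_le_one a)
  -- `x / x ≤ 1` also covers `N ≤ 1`, where Lean divides by zero
  rw [ge_iff_le]
  calc _ ≤ 1 / (N : ℝ) * (N * ∑ s, ∑ i, skewInfo hρ (K s i)) := by
        rw [card_mul_sum_sum_skewInfo_eq hρ K π]
        gcongr
    _ = (N / N : ℝ) * ∑ s, ∑ i, skewInfo hρ (K s i) := by ring
    _ ≤ _ := mul_le_of_le_one_left
      (sum_nonneg fun s _ => sum_nonneg fun i _ => skewInfo_nonneg hρ _) (div_self_le_one _)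

theorem stmt_1 {d n N : ℕ} (hN : 2 ≤ N)
    (ρ : Matrix (Fin d) (Fin d) ℂ) (hρ : ρ.PosSemidef) (htr : ρ.trace = 1)
    (K : Fin N → Fin n → Matrix (Fin d) (Fin d) ℂ)
    (hK : ∀ s, ∑ i, (K s i)ᴴ * K s i = 1)
    (π : Fin N → Equiv.Perm (Fin n)) :
    ∑ s, ∑ i, skewInfo hρ (K s i) ≥
      (1 / (N : ℝ)) *
        ((∑ i, skewInfo hρ (∑ s, K s (π s i)))
          + (2 / ((N : ℝ) * ((N : ℝ) - 1))) *
            (∑ s : Fin N, ∑ t ∈ Finset.Ioi s,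
              Real.sqrt (∑ i, skewInfo hρ (K s (π s i) - K t (π t i)))) ^ 2) :=
  stmt_1_general ρ hρ K π
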